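/- Let R be a domain, I a nonzero ideal of R, and x ∈ R such that I is a t-reduction of (I, x). Then there exists a finitely generated ideal F ⊆ I such that F is a t-reduction of (F, x). -/

import Mathlib

/-!
Since `x ^ (n + 1) ∈ (I, x) ^ (n + 1) ⊆ (I (I, x) ^ n)_t`, it suffices to capture this one
element with a finitely generated `F ⊆ I`: then `(F, x) ^ (n + 1) ⊆ F (F, x) ^ n + x ^ (n + 1) R`
lies in `(F (F, x) ^ n)_t`, so `F` is a `t`-reduction of `(F, x)`. Such an `F` exists because
`I (I, x) ^ n` is the directed union of the ideals `F (F, x) ^ n`, and the `t`-operation commutes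
with directed unions, a finitely generated ideal being compact in the lattice of submodules.
-/

open scoped nonZeroDivisors

/-- The `v`-operation (divisorial closure) on `R`-submodules of the fraction field `K`:
`I_v = (I⁻¹)⁻¹` where `I⁻¹ = (R : I) = 1 / I`. -/
noncomputable def vS (R K : Type*) [CommRing R] [Field K] [Algebra R K]
    (I : Submodule R K) : Submodule R K := 1 / (1 / I)

/-- The `t`-operation: `I_t = ⋃ J_v` where `J` ranges over nonzero finitely generated
sub-ideals of `I`. -/
noncomputable def tS (R K : Type*) [CommRing R] [Field K] [Algebra R K]
    (I : Submodule R K) : Submodule R K :=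
  ⨆ J ∈ {J : Submodule R K | J ≠ ⊥ ∧ J.FG ∧ J ≤ I}, vS R K J

/-- The image of an ideal of `R` in the fraction field `K`, as an `R`-submodule. -/
noncomputable def idealToSub (R K : Type*) [CommRing R] [Field K] [Algebra R K]
    (I : Ideal R) : Submodule R K := Submodule.map (Algebra.linearMap R K) I

/-- The `t`-closure of an ideal of `R`, computed in the fraction field `K`. -/
noncomputable def tI (R K : Type*) [CommRing R] [Field K] [Algebra R K]
    (I : Ideal R) : Submodule R K := tS R K (idealToSub R K I)

/-- The `v`-closure of an ideal of `R`, computed in the fraction field `K`. -/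
noncomputable def vI (R K : Type*) [CommRing R] [Field K] [Algebra R K]
    (I : Ideal R) : Submodule R K := vS R K (idealToSub R K I)

namespace Submodule

theorem FG.exists_le_of_le_iSup {R M ι : Type*} [Semiring R] [AddCommMonoid M]
    [Module R M] {J : Submodule R M} (hJ : J.FG) (hJ0 : J ≠ ⊥) {N : ι → Submodule R M}
    (hN : Directed (· ≤ ·) N) (hle : J ≤ ⨆ i, N i) : ∃ i, J ≤ N i := by
  have : Nonempty ι := not_isEmpty_iff.mp fun _ => hJ0 (le_bot_iff.mp (iSup_of_empty N ▸ hle))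
  obtain ⟨_, ⟨i, rfl⟩, hi⟩ :=
    (CompleteLattice.isCompactElement_iff_le_of_directed_sSup_le (α := Submodule R M) J).mp
      ((fg_iff_compact J).mp hJ) _ (Set.range_nonempty N) hN.directedOn_range hle
  exact ⟨i, hi⟩

section DirectedSup

variable {R A ι : Type*} [CommSemiring R] [Semiring A] [Algebra R A]
  [Preorder ι] [IsDirectedOrder ι] {f g : ι → Submodule R A}

theorem iSup_mul_iSup_of_monotone (hf : Monotone f) (hg : Monotone g) :
    (⨆ i, f i) * ⨆ i, g i = ⨆ i, f i * g i := by
  refine le_antisymm ?_ (iSup_le fun i => mul_le_mul' (le_iSup f i) (le_iSup g i))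
  rw [iSup_mul]
  refine iSup_le fun i => ?_
  rw [mul_iSup]
  refine iSup_le fun j => ?_
  obtain ⟨k, hik, hjk⟩ := directed_of (· ≤ ·) i j
  exact le_iSup_of_le k (mul_le_mul' (hf hik) (hg hjk))

theorem iSup_pow_of_monotone [Nonempty ι] (hf : Monotone f) (n : ℕ) :
    (⨆ i, f i) ^ n = ⨆ i, f i ^ n := by
  induction n with
  | zero => simp
  | succ n ih =>
    simp_rw [pow_succ]
    rw [ih]
    exact iSup_mul_iSup_of_monotone (fun i j hij => pow_le_pow_left' (hf hij) n) hf

end DirectedSup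

theorem one_div_antitone {R A : Type*} [CommSemiring R] [CommSemiring A] [Algebra R A] :
    Antitone fun N : Submodule R A => 1 / N := fun _ _ h =>
  le_div_iff_mul_le.mpr <|
    (mul_le_mul_right h _).trans <| (mul_comm _ _).le.trans mul_one_div_le_one

end Submodule

section Closure

variable {R K : Type*} [CommRing R] [Field K] [Algebra R K]

theorem le_vS (N : Submodule R K) : N ≤ vS R K N :=
  Submodule.le_div_iff_mul_le.mpr Submodule.mul_one_div_le_one

theorem vS_mono : Monotone (vS R K) :=
  fun _ _ h => Submodule.one_div_antitone (Submodule.one_div_antitone h)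

theorem vS_vS (N : Submodule R K) : vS R K (vS R K N) = vS R K N :=
  le_antisymm (Submodule.one_div_antitone (le_vS _)) (le_vS _)

theorem vS_le_tS {J N : Submodule R K} (hJ0 : J ≠ ⊥) (hJ : J.FG) (hJN : J ≤ N) :
    vS R K J ≤ tS R K N :=
  le_biSup (vS R K) (show J ∈ {J | J ≠ ⊥ ∧ J.FG ∧ J ≤ N} from ⟨hJ0, hJ, hJN⟩)

theorem le_tS (N : Submodule R K) : N ≤ tS R K N := by
  intro y hy
  by_cases hy0 : y = 0
  · simp [hy0]
  · have hspan : Submodule.span R {y} ≠ ⊥ := by simpa using hy0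
    exact vS_le_tS hspan (Submodule.fg_span_singleton y)
      ((Submodule.span_singleton_le_iff_mem y N).mpr hy)
      (le_vS _ (Submodule.mem_span_singleton_self y))

theorem tS_mono : Monotone (tS R K) :=
  fun _ _ h => iSup₂_le fun _ hJ => vS_le_tS hJ.1 hJ.2.1 (hJ.2.2.trans h)

theorem tS_eq_iSup_vS (N : Submodule R K) :
    tS R K N = ⨆ J : {J : Submodule R K // J ≠ ⊥ ∧ J.FG ∧ J ≤ N}, vS R K J := by
  rw [tS, iSup_subtype']
  rfl

theorem directed_vS_fg (N : Submodule R K) :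
    Directed (· ≤ ·)
      fun J : {J : Submodule R K // J ≠ ⊥ ∧ J.FG ∧ J ≤ N} => vS R K J :=
  fun ⟨J₁, h₁, fg₁, le₁⟩ ⟨J₂, _, fg₂, le₂⟩ =>
    ⟨⟨J₁ ⊔ J₂, fun h => h₁ (le_bot_iff.mp (h ▸ le_sup_left)), fg₁.sup fg₂,
      sup_le le₁ le₂⟩, vS_mono le_sup_left, vS_mono le_sup_right⟩

theorem tS_le_of_le_tS {M N : Submodule R K} (h : M ≤ tS R K N) : tS R K M ≤ tS R K N := by
  refine iSup₂_le fun J ⟨hJ0, hJ, hJM⟩ => ?_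
  obtain ⟨⟨C, hC0, hC, hCN⟩, hJC⟩ :=
    hJ.exists_le_of_le_iSup hJ0 (directed_vS_fg N) (tS_eq_iSup_vS N ▸ hJM.trans h)
  calc vS R K J ≤ vS R K (vS R K C) := vS_mono hJC
    _ = vS R K C := vS_vS C
    _ ≤ tS R K N := vS_le_tS hC0 hC hCN

theorem tS_iSup_of_directed {ι : Type*} {N : ι → Submodule R K} (hN : Directed (· ≤ ·) N) :
    tS R K (⨆ i, N i) = ⨆ i, tS R K (N i) := by
  refine le_antisymm (iSup₂_le fun J ⟨hJ0, hJ, hJN⟩ => ?_)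
    (iSup_le fun i => tS_mono (le_iSup N i))
  obtain ⟨i, hi⟩ := hJ.exists_le_of_le_iSup hJ0 hN hJN
  exact (vS_le_tS hJ0 hJ hi).trans (le_iSup (fun i => tS R K (N i)) i)

end Closure

namespace Ideal

variable {R : Type*} [CommSemiring R]

def spanFinset (I : Ideal R) (s : Finset I) : Ideal R :=
  span (s.map (Function.Embedding.subtype (· ∈ I)))

theorem spanFinset_fg (I : Ideal R) (s : Finset I) : (I.spanFinset s).FG := ⟨_, rfl⟩

theorem spanFinset_le (I : Ideal R) (s : Finset I) : I.spanFinset s ≤ I :=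
  span_le.mpr fun _ ha => by
    obtain ⟨a, -, rfl⟩ := Finset.mem_map.mp ha
    exact a.2

theorem spanFinset_mono (I : Ideal R) : Monotone I.spanFinset :=
  fun _ _ hst => span_mono (Finset.coe_subset.mpr (Finset.map_subset_map.mpr hst))

theorem iSup_spanFinset (I : Ideal R) : ⨆ s, I.spanFinset s = I :=
  le_antisymm (iSup_le I.spanFinset_le) fun a ha =>
    Submodule.mem_iSup_of_mem {⟨a, ha⟩} (subset_span (by simp))

theorem mul_sup_pow_eq_iSup_spanFinset (I X : Ideal R) (n : ℕ) :
    I * (I ⊔ X) ^ n = ⨆ s, I.spanFinset s * (I.spanFinset s ⊔ X) ^ n := by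
  have hsup : Monotone fun s => I.spanFinset s ⊔ X :=
    fun _ _ h => sup_le_sup_right (I.spanFinset_mono h) X
  conv_lhs => rw [← I.iSup_spanFinset, iSup_sup, Submodule.iSup_pow_of_monotone hsup n]
  exact Submodule.iSup_mul_iSup_of_monotone I.spanFinset_mono
    fun _ _ h => pow_le_pow_left' (hsup h) n

theorem monotone_mul_sup_pow (X : Ideal R) (n : ℕ) :
    Monotone fun F : Ideal R => F * (F ⊔ X) ^ n :=
  fun _ _ h => mul_le_mul' h (pow_le_pow_left' (sup_le_sup_right h X) n)

theorem sup_pow_succ_le (I J : Ideal R) (n : ℕ) :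
    (I ⊔ J) ^ (n + 1) ≤ I * (I ⊔ J) ^ n ⊔ J ^ (n + 1) := by
  induction n with
  | zero => simp
  | succ n ih =>
    have hJI : I * J ^ (n + 1) ≤ I * (I ⊔ J) ^ (n + 1) :=
      mul_le_mul_right (pow_le_pow_left' le_sup_right _) I
    calc (I ⊔ J) ^ (n + 2) = (I ⊔ J) ^ (n + 1) * (I ⊔ J) := pow_succ _ _
      _ ≤ (I * (I ⊔ J) ^ n ⊔ J ^ (n + 1)) * (I ⊔ J) := by grw [ih]
      _ = I * (I ⊔ J) ^ (n + 1) ⊔ (I * J ^ (n + 1) ⊔ J ^ (n + 2)) := by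
        simp only [← add_eq_sup]
        ring
      _ ≤ I * (I ⊔ J) ^ (n + 1) ⊔ J ^ (n + 2) := by
        grw [hJI, ← sup_assoc, sup_idem]

end Ideal

section IdealClosure

variable {R K : Type*} [CommRing R] [Field K] [Algebra R K]

theorem idealToSub_mono : Monotone (idealToSub R K) := fun _ _ h => Submodule.map_mono h

theorem idealToSub_span_singleton (x : R) :
    idealToSub R K (Ideal.span {x}) = Submodule.span R {algebraMap R K x} := by
  rw [idealToSub, Ideal.span, Submodule.map_span, Set.image_singleton]
  rfl

theorem tI_mono : Monotone (tI R K) := tS_mono.comp idealToSub_mono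

theorem tI_iSup_of_monotone {ι : Type*} [Preorder ι] [IsDirectedOrder ι] {I : ι → Ideal R}
    (hI : Monotone I) : tI R K (⨆ i, I i) = ⨆ i, tI R K (I i) := by
  rw [tI, idealToSub, Submodule.map_iSup]
  exact tS_iSup_of_directed (idealToSub_mono.comp hI).directed_le

theorem tI_mul_sup_pow_eq_of_mem {F : Ideal R} {x : R} {n : ℕ}
    (hx : algebraMap R K (x ^ (n + 1)) ∈ tI R K (F * (F ⊔ Ideal.span {x}) ^ n)) :
    tI R K (F * (F ⊔ Ideal.span {x}) ^ n) = tI R K ((F ⊔ Ideal.span {x}) ^ (n + 1)) := by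
  refine le_antisymm (tS_mono (Submodule.map_mono ?_)) (tS_le_of_le_tS ?_)
  · rw [pow_succ']
    exact mul_le_mul_left le_sup_left _
  · have hxF : idealToSub R K (Ideal.span {x} ^ (n + 1)) ≤
        tI R K (F * (F ⊔ Ideal.span {x}) ^ n) := by
      rwa [Ideal.span_singleton_pow, idealToSub_span_singleton,
        Submodule.span_singleton_le_iff_mem]
    refine (idealToSub_mono (Ideal.sup_pow_succ_le F _ n)).trans ?_
    rw [idealToSub, Submodule.map_sup]
    exact sup_le (le_tS _) hxF

end IdealClosure

theorem exists_fg_t_reduction_general (R K : Type*) [CommRing R]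
    [Field K] [Algebra R K]
    (I : Ideal R) (x : R)
    (h : ∃ n : ℕ, tI R K (I * (I + Ideal.span {x}) ^ n)
      = tI R K ((I + Ideal.span {x}) ^ (n + 1))) :
    ∃ F : Ideal R, F.FG ∧ F ≤ I ∧
      ∃ n : ℕ, tI R K (F * (F + Ideal.span {x}) ^ n)
        = tI R K ((F + Ideal.span {x}) ^ (n + 1)) := by
  obtain ⟨n, hn⟩ := h
  simp only [Ideal.add_eq_sup] at hn ⊢
  have hx : algebraMap R K (x ^ (n + 1)) ∈ tI R K (I * (I ⊔ Ideal.span {x}) ^ n) :=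
    hn ▸ le_tS _
      ⟨_, Ideal.pow_mem_pow (Ideal.mem_sup_right (Ideal.mem_span_singleton_self x)) _, rfl⟩
  have hmono : Monotone fun s => I.spanFinset s * (I.spanFinset s ⊔ Ideal.span {x}) ^ n :=
    (Ideal.monotone_mul_sup_pow _ n).comp I.spanFinset_mono
  rw [Ideal.mul_sup_pow_eq_iSup_spanFinset, tI_iSup_of_monotone hmono] at hx
  obtain ⟨s, hs⟩ := (Submodule.mem_iSup_of_directed _ (tI_mono.comp hmono).directed_le).mp hx
  exact ⟨I.spanFinset s, I.spanFinset_fg s, I.spanFinset_le s, n, tI_mul_sup_pow_eq_of_mem hs⟩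

/-- If `I` is a nonzero ideal of `R` and `x ∈ R` is such that `I` is a `t`-reduction of
`(I, x)`, then there is a finitely generated ideal `F ⊆ I` such that `F` is a `t`-reduction
of `(F, x)`. -/
theorem exists_fg_t_reduction (R K : Type*) [CommRing R] [IsDomain R]
    [Field K] [Algebra R K] [IsFractionRing R K]
    (I : Ideal R) (hI0 : I ≠ 0) (x : R)
    (h : ∃ n : ℕ, tI R K (I * (I + Ideal.span {x}) ^ n)
      = tI R K ((I + Ideal.span {x}) ^ (n + 1))) :
    ∃ F : Ideal R, F.FG ∧ F ≤ I ∧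
      ∃ n : ℕ, tI R K (F * (F + Ideal.span {x}) ^ n)
        = tI R K ((F + Ideal.span {x}) ^ (n + 1)) :=
  exists_fg_t_reduction_general R K I x h
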